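/- arXiv:2306.13748 — 2 statements merged into one kernel-verified Lean document; each statement's English description precedes it below -/
import Mathlib

section
/- Let M ∈ ℝ^{n×m} with m ≤ n, and let M = U Σ Vᵀ be a thin singular value decomposition (U ∈ ℝ^{n×m} with UᵀU = I_m, V ∈ ℝ^{m×m} orthogonal, Σ diagonal with the singular values of M on the diagonal). Then Ω* = U Vᵀ satisfies (Ω*)ᵀΩ* = I_m and tr((Ω*)ᵀ M) = Σ_{i=1}^{m} σ_i(M), so Ω* maximizes tr(Ωᵀ M) over all Ω ∈ ℝ^{n×m} with ΩᵀΩ = I_m. -/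
open Matrix BigOperators

lemma key_procrustes (n m : ℕ) (U W : Matrix (Fin n) (Fin m) ℝ)
    (hU : Uᵀ * U = 1) (hW : Wᵀ * W = 1) (σ : Fin m → ℝ) (hσ0 : ∀ i, 0 ≤ σ i) :
    Matrix.trace (Wᵀ * (U * Matrix.diagonal σ)) ≤ ∑ i, σ i := by
  rw [← Matrix.mul_assoc, Matrix.trace]
  have : ∀ i, (Wᵀ * U * Matrix.diagonal σ).diag i = (Wᵀ * U) i i * σ i := by
    intro i; simp [Matrix.diag, Matrix.mul_diagonal]
  simp only [this]
  apply Finset.sum_le_sum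
  intro i _
  have h1 : (Wᵀ * U) i i ≤ 1 := by
    have hWi : ∑ k, W k i ^ 2 = 1 := by
      have := congrFun (congrFun hW i) i
      simpa [Matrix.mul_apply, Matrix.one_apply, sq] using this
    have hUi : ∑ k, U k i ^ 2 = 1 := by
      have := congrFun (congrFun hU i) i
      simpa [Matrix.mul_apply, Matrix.one_apply, sq] using this
    have hcs := Finset.sum_mul_sq_le_sq_mul_sq Finset.univ
      (fun k => W k i) (fun k => U k i)
    rw [hWi, hUi, one_mul] at hcs
    have heq : (Wᵀ * U) i i = ∑ k, W k i * U k i := by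
      simp [Matrix.mul_apply]
    rw [heq]
    nlinarith [hcs]
  calc (Wᵀ * U) i i * σ i ≤ 1 * σ i := mul_le_mul_of_nonneg_right h1 (hσ0 i)
    _ = σ i := one_mul _

/-- Let `M = U Σ Vᵀ` be a thin SVD of `M ∈ ℝ^{n×m}` (`m ≤ n`), with
`Σ = diag σ` the singular values of `M`. Then `Ω* = U Vᵀ` is semi-orthogonal,
achieves `tr((Ω*)ᵀ M) = ∑ σ_i`, and maximizes `tr(Ωᵀ M)` over all semi-orthogonal
`Ω ∈ ℝ^{n×m}`. -/
theorem procrustes_solution (n m : ℕ) (hmn : m ≤ n)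
    (M : Matrix (Fin n) (Fin m) ℝ)
    (U : Matrix (Fin n) (Fin m) ℝ) (hU : Uᵀ * U = 1)
    (V : Matrix (Fin m) (Fin m) ℝ) (hV : Vᵀ * V = 1)
    (σ : Fin m → ℝ) (hσ0 : ∀ i, 0 ≤ σ i) (hσmono : Antitone σ)
    (hSVD : M = U * Matrix.diagonal σ * Vᵀ)
    (Ωstar : Matrix (Fin n) (Fin m) ℝ) (hΩstar : Ωstar = U * Vᵀ) :
    Ωstarᵀ * Ωstar = 1 ∧
      Matrix.trace (Ωstarᵀ * M) = ∑ i, σ i ∧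
      ∀ Ω : Matrix (Fin n) (Fin m) ℝ, Ωᵀ * Ω = 1 →
        Matrix.trace (Ωᵀ * M) ≤ Matrix.trace (Ωstarᵀ * M) := by
  have hVV : V * Vᵀ = 1 := mul_eq_one_comm.mp hV
  have horth : Ωstarᵀ * Ωstar = 1 := by
    subst hΩstar
    calc (U * Vᵀ)ᵀ * (U * Vᵀ) = V * (Uᵀ * U) * Vᵀ := by
          simp [Matrix.transpose_mul, Matrix.mul_assoc]
      _ = 1 := by rw [hU]; simpa using hVV
  have htr : Matrix.trace (Ωstarᵀ * M) = ∑ i, σ i := by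
    subst hΩstar hSVD
    have : (U * Vᵀ)ᵀ * (U * Matrix.diagonal σ * Vᵀ)
        = V * ((Uᵀ * U) * Matrix.diagonal σ * Vᵀ) := by
      simp [Matrix.transpose_mul, Matrix.mul_assoc]
    rw [this, hU, Matrix.one_mul, Matrix.trace_mul_comm, Matrix.mul_assoc, hV,
      Matrix.mul_one, Matrix.trace_diagonal]
  refine ⟨horth, htr, ?_⟩
  intro Ω hΩ
  rw [htr, hSVD]
  have h1 : Ωᵀ * (U * Matrix.diagonal σ * Vᵀ) = Ωᵀ * (U * Matrix.diagonal σ) * Vᵀ := by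
    simp only [Matrix.mul_assoc]
  rw [h1, Matrix.trace_mul_comm, ← Matrix.mul_assoc]
  have h2 : Vᵀ * Ωᵀ = (Ω * V)ᵀ := by simp [Matrix.transpose_mul]
  rw [h2]
  have hWorth : (Ω * V)ᵀ * (Ω * V) = 1 := by
    rw [Matrix.transpose_mul, Matrix.mul_assoc, ← Matrix.mul_assoc Ωᵀ Ω V, hΩ,
      Matrix.one_mul, hV]
  exact key_procrustes n m U (Ω * V) hU hWorth σ hσ0
end

section
/- Let S ∈ ℝ^{n×k} and A ∈ ℝ^{m×k} with m ≤ n, and suppose S Aᵀ has rank m. Then the maximizer of tr(Ωᵀ S Aᵀ) over Ω ∈ ℝ^{n×m} with ΩᵀΩ = I_m is unique, and equals U Vᵀ for any thin SVD S Aᵀ = U Σ Vᵀ. -/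
open Matrix

/-!
With `W = Ω V`, the objective at `Ω` is `tr (Wᵀ U Σ)` and at `U Vᵀ` it is `tr Σ`. For
semi-orthogonal `W` and `U` one has `tr ((W - U)ᵀ (W - U) Σ) = 2 (tr Σ - tr (Wᵀ U Σ))`, and the
left side is `∑ⱼ σⱼ ‖Wⱼ - Uⱼ‖²`. Maximality of `Ω` makes it `≤ 0`; full rank makes every
`σⱼ > 0`, so every column of `W - U` vanishes, i.e. `Ω V = U`.
-/

namespace Matrix

variable {ι κ R : Type*} [Fintype ι] [Fintype κ]

theorem ne_zero_of_card_le_rank_diagonal [Field R] [DecidableEq κ] [DecidableEq R]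
    {σ : κ → R} (h : Fintype.card κ ≤ (diagonal σ).rank) (j : κ) : σ j ≠ 0 := by
  rw [rank_diagonal] at h
  by_contra hj
  exact (Fintype.card_subtype_lt (p := fun i => σ i ≠ 0) (x := j) (not_not.mpr hj)).not_ge h

theorem transpose_mul_self_mul_eq_one [CommSemiring R] [DecidableEq κ]
    {A : Matrix ι κ R} {B : Matrix κ κ R} (hA : Aᵀ * A = 1) (hB : Bᵀ * B = 1) :
    (A * B)ᵀ * (A * B) = 1 := by
  rw [transpose_mul, Matrix.mul_assoc, ← Matrix.mul_assoc Aᵀ, hA, Matrix.one_mul, hB]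

theorem trace_transpose_mul_mul_diagonal_mul_transpose [CommSemiring R] [DecidableEq κ]
    (Ω U : Matrix ι κ R) (V : Matrix κ κ R) (σ : κ → R) :
    trace (Ωᵀ * (U * diagonal σ * Vᵀ)) = trace ((Ω * V)ᵀ * U * diagonal σ) := by
  rw [← Matrix.mul_assoc, trace_mul_comm, transpose_mul]
  simp only [Matrix.mul_assoc]

theorem trace_transpose_mul_self_mul_diagonal [CommSemiring R] [DecidableEq κ]
    (X : Matrix ι κ R) (σ : κ → R) :
    trace (Xᵀ * X * diagonal σ) = ∑ j, σ j * ∑ i, X i j ^ 2 := by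
  simp only [trace, diag_apply, mul_diagonal]
  simp only [mul_apply, transpose_apply, Finset.sum_mul, Finset.mul_sum, sq]
  exact Finset.sum_congr rfl fun _ _ => Finset.sum_congr rfl fun _ _ => by ring

theorem eq_zero_of_trace_transpose_mul_self_mul_diagonal_nonpos [CommRing R] [LinearOrder R]
    [IsStrictOrderedRing R] [DecidableEq κ] {X : Matrix ι κ R} {σ : κ → R} (hσ : ∀ j, 0 < σ j)
    (h : trace (Xᵀ * X * diagonal σ) ≤ 0) : X = 0 := by
  rw [trace_transpose_mul_self_mul_diagonal] at h
  have hterm : ∀ j ∈ Finset.univ, 0 ≤ σ j * ∑ i, X i j ^ 2 := fun j _ =>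
    mul_nonneg (hσ j).le (Finset.sum_nonneg fun i _ => sq_nonneg (X i j))
  have hzero := (Finset.sum_eq_zero_iff_of_nonneg hterm).mp (h.antisymm (Finset.sum_nonneg hterm))
  ext i j
  have hcol : ∑ i, X i j ^ 2 = 0 :=
    (mul_eq_zero.mp (hzero j (Finset.mem_univ j))).resolve_left (hσ j).ne'
  exact pow_eq_zero_iff two_ne_zero |>.mp <|
    (Finset.sum_eq_zero_iff_of_nonneg fun i _ => sq_nonneg (X i j)).mp hcol i (Finset.mem_univ i)

theorem trace_sub_transpose_mul_sub_mul_diagonal [CommRing R] [DecidableEq κ]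
    {W U : Matrix ι κ R} (hW : Wᵀ * W = 1) (hU : Uᵀ * U = 1) (σ : κ → R) :
    trace ((W - U)ᵀ * (W - U) * diagonal σ) = 2 * (∑ j, σ j - trace (Wᵀ * U * diagonal σ)) := by
  have hsymm : trace (Uᵀ * W * diagonal σ) = trace (Wᵀ * U * diagonal σ) := by
    rw [← trace_transpose, transpose_mul, transpose_mul, diagonal_transpose, transpose_transpose,
      trace_mul_comm, Matrix.mul_assoc]
  rw [transpose_sub, Matrix.sub_mul, Matrix.mul_sub, Matrix.mul_sub, hW, hU]
  simp only [Matrix.sub_mul, trace_sub, Matrix.one_mul, trace_diagonal, hsymm]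
  ring

end Matrix

theorem procrustes_unique_maximizer_general (n k m : ℕ)
    (S : Matrix (Fin n) (Fin k) ℝ) (A : Matrix (Fin m) (Fin k) ℝ)
    (hrank : (S * Aᵀ).rank = m)
    (U : Matrix (Fin n) (Fin m) ℝ) (hU : Uᵀ * U = 1)
    (V : Matrix (Fin m) (Fin m) ℝ) (hV : Vᵀ * V = 1)
    (σ : Fin m → ℝ) (hσ0 : ∀ i, 0 ≤ σ i)
    (hSVD : S * Aᵀ = U * Matrix.diagonal σ * Vᵀ)
    (Ω : Matrix (Fin n) (Fin m) ℝ) (hΩ : Ωᵀ * Ω = 1)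
    (hmax : ∀ Ω' : Matrix (Fin n) (Fin m) ℝ, Ω'ᵀ * Ω' = 1 →
      Matrix.trace (Ω'ᵀ * (S * Aᵀ)) ≤ Matrix.trace (Ωᵀ * (S * Aᵀ))) :
    Ω = U * Vᵀ := by
  have hVV : V * Vᵀ = 1 := mul_eq_one_comm.mp hV
  have hrank_le : Fintype.card (Fin m) ≤ (diagonal σ).rank :=
    calc Fintype.card (Fin m) = (S * Aᵀ).rank := by rw [Fintype.card_fin, hrank]
      _ ≤ (diagonal σ).rank := hSVD ▸ (rank_mul_le_left _ _).trans (rank_mul_le_right _ _)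
  have hσ : ∀ j, 0 < σ j := fun j =>
    (hσ0 j).lt_of_ne' (ne_zero_of_card_le_rank_diagonal hrank_le j)
  have hUV : (U * Vᵀ)ᵀ * (U * Vᵀ) = 1 :=
    transpose_mul_self_mul_eq_one hU (by rwa [transpose_transpose])
  have hle := hmax _ hUV
  rw [hSVD, trace_transpose_mul_mul_diagonal_mul_transpose,
    trace_transpose_mul_mul_diagonal_mul_transpose, Matrix.mul_assoc U, hV, Matrix.mul_one, hU,
    Matrix.one_mul, trace_diagonal] at hle
  have hΩV : Ω * V - U = 0 := by
    refine eq_zero_of_trace_transpose_mul_self_mul_diagonal_nonpos hσ ?_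
    rw [trace_sub_transpose_mul_sub_mul_diagonal (transpose_mul_self_mul_eq_one hΩ hV) hU]
    linarith
  calc Ω = Ω * V * Vᵀ := by rw [Matrix.mul_assoc, hVV, Matrix.mul_one]
    _ = U * Vᵀ := by rw [sub_eq_zero.mp hΩV]

/-- If `S Aᵀ ∈ ℝ^{n×m}` (`m ≤ n`) has full rank `m`, then the
maximizer of `tr(Ωᵀ S Aᵀ)` over semi-orthogonal `Ω ∈ ℝ^{n×m}` is unique and
equals `U Vᵀ` for any thin SVD `S Aᵀ = U Σ Vᵀ`. -/
theorem procrustes_unique_maximizer (n k m : ℕ) (hmn : m ≤ n)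
    (S : Matrix (Fin n) (Fin k) ℝ) (A : Matrix (Fin m) (Fin k) ℝ)
    (hrank : (S * Aᵀ).rank = m)
    (U : Matrix (Fin n) (Fin m) ℝ) (hU : Uᵀ * U = 1)
    (V : Matrix (Fin m) (Fin m) ℝ) (hV : Vᵀ * V = 1)
    (σ : Fin m → ℝ) (hσ0 : ∀ i, 0 ≤ σ i) (hσmono : Antitone σ)
    (hSVD : S * Aᵀ = U * Matrix.diagonal σ * Vᵀ)
    (Ω : Matrix (Fin n) (Fin m) ℝ) (hΩ : Ωᵀ * Ω = 1)
    (hmax : ∀ Ω' : Matrix (Fin n) (Fin m) ℝ, Ω'ᵀ * Ω' = 1 →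
      Matrix.trace (Ω'ᵀ * (S * Aᵀ)) ≤ Matrix.trace (Ωᵀ * (S * Aᵀ))) :
    Ω = U * Vᵀ :=
  procrustes_unique_maximizer_general n k m S A hrank U hU V hV σ hσ0 hSVD Ω hΩ hmax
end
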